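/- arXiv:1706.02803 — 4 statements merged into one kernel-verified Lean document; each statement's English description precedes it below -/
import Mathlib

section
/- Let A be an n×m real matrix and U an n×c matrix with orthonormal columns, and let s ≤ c be a positive integer. Then the rank-s truncated SVD (UᵀA)_s minimizes ‖A − UZ‖_F² over all m-column matrices Z with rank(Z) ≤ s. -/
open Matrix

/-- Squared Frobenius norm of a real matrix. -/
noncomputable def frobSq {n m : ℕ} (A : Matrix (Fin n) (Fin m) ℝ) : ℝ :=
  ∑ i, ∑ j, (A i j) ^ 2

/-- `B` is a best rank-`s` approximation of `A` in Frobenius norm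
(i.e. a rank-`s` truncated SVD of `A`). -/
def IsTruncatedSVD {n m : ℕ} (A B : Matrix (Fin n) (Fin m) ℝ) (s : ℕ) : Prop :=
  B.rank ≤ s ∧ ∀ Z : Matrix (Fin n) (Fin m) ℝ, Z.rank ≤ s → frobSq (A - B) ≤ frobSq (A - Z)

lemma frobSq_eq_trace {n m : ℕ} (A : Matrix (Fin n) (Fin m) ℝ) :
    frobSq A = Matrix.trace (Aᵀ * A) := by
  simp only [frobSq, Matrix.trace, Matrix.diag, Matrix.mul_apply, Matrix.transpose_apply, sq]
  rw [Finset.sum_comm]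

lemma pythagoras {n m c : ℕ} (A : Matrix (Fin n) (Fin m) ℝ) (U : Matrix (Fin n) (Fin c) ℝ)
    (hU : Uᵀ * U = 1) (X : Matrix (Fin c) (Fin m) ℝ) :
    frobSq (A - U * X) = frobSq (A - U * (Uᵀ * A)) + frobSq (Uᵀ * A - X) := by
  have hc : Matrix.trace (Xᵀ * (Uᵀ * A)) = Matrix.trace (Aᵀ * U * X) := by
    rw [← Matrix.trace_transpose (Aᵀ * U * X)]
    simp [Matrix.transpose_mul, Matrix.mul_assoc]
  simp only [frobSq_eq_trace, Matrix.transpose_sub, Matrix.transpose_mul,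
    Matrix.transpose_transpose, Matrix.sub_mul, Matrix.mul_sub,
    Matrix.trace_sub]
  have h1 : Xᵀ * Uᵀ * (U * X) = Xᵀ * X := by
    rw [Matrix.mul_assoc, ← Matrix.mul_assoc Uᵀ, hU, Matrix.one_mul]
  have h2 : Aᵀ * U * Uᵀ * (U * (Uᵀ * A)) = Aᵀ * U * (Uᵀ * A) := by
    rw [Matrix.mul_assoc (Aᵀ * U) Uᵀ, ← Matrix.mul_assoc Uᵀ, hU, Matrix.one_mul]
  have h3 : Xᵀ * Uᵀ * A = Xᵀ * (Uᵀ * A) := by rw [Matrix.mul_assoc]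
  have h4 : Aᵀ * (U * X) = Aᵀ * U * X := by rw [Matrix.mul_assoc]
  have h5 : Aᵀ * (U * (Uᵀ * A)) = Aᵀ * U * (Uᵀ * A) := by rw [Matrix.mul_assoc]
  have h6 : Aᵀ * U * Uᵀ * A = Aᵀ * U * (Uᵀ * A) := by rw [Matrix.mul_assoc]
  rw [h1, h2, h3, h4, h5, h6, hc]
  ring

/-- For `A ∈ ℝ^{n×m}` and `U ∈ ℝ^{n×c}` with orthonormal columns and
`0 < s ≤ c`, the rank-`s` truncated SVD `(UᵀA)_s` minimizes `‖A − U Z‖_F²` over all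
matrices `Z` of rank at most `s`. -/
theorem truncated_svd_minimizes {n m c s : ℕ} (hs : 0 < s) (hsc : s ≤ c)
    (A : Matrix (Fin n) (Fin m) ℝ) (U : Matrix (Fin n) (Fin c) ℝ)
    (hU : Uᵀ * U = 1)
    (M : Matrix (Fin c) (Fin m) ℝ) (hM : IsTruncatedSVD (Uᵀ * A) M s) :
    ∀ Z : Matrix (Fin c) (Fin m) ℝ, Z.rank ≤ s →
      frobSq (A - U * M) ≤ frobSq (A - U * Z) := by
  intro Z hZ
  rw [pythagoras A U hU M, pythagoras A U hU Z]
  exact add_le_add le_rfl (hM.2 Z hZ)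
end

section
/- Let A ∈ ℝ^{n×n} be symmetric positive semidefinite with truncated eigendecomposition A_s = V_s Σ_s V_sᵀ, and let P ∈ ℝ^{n×c} be such that PᵀV_s has full column rank s. Let t ≥ 1 be an integer and C = Aᵗ P. Then for ξ ∈ {2, F}: min over matrices X with rank(X) ≤ s of ‖A − CX‖_ξ² is at most ‖A − A_s‖_ξ² + (σ_{s+1}²/σ_s²)^{t−1} · ‖(A − A_s) P (V_sᵀP)†‖_ξ², where σ_i is the i-th largest singular value of A. -/
open Matrix

/-- Spectral norm (ℓ²-operator norm) of a real matrix. -/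
noncomputable def specNorm {n m : ℕ} (A : Matrix (Fin n) (Fin m) ℝ) : ℝ :=
  ‖LinearMap.toContinuousLinearMap (Matrix.toEuclideanLin A)‖

/-- `Md` is the Moore–Penrose pseudoinverse of `M` (the four Penrose conditions). -/
def IsMoorePenrose {a b : ℕ} (M : Matrix (Fin a) (Fin b) ℝ)
    (Md : Matrix (Fin b) (Fin a) ℝ) : Prop :=
  M * Md * M = M ∧ Md * M * Md = Md ∧ (M * Md)ᵀ = M * Md ∧ (Md * M)ᵀ = Md * M

namespace PSBaux

lemma le_of_sq_le_sq {x y : ℝ} (hx : 0 ≤ x) (hy : 0 ≤ y) (h : x ^ 2 ≤ y ^ 2) : x ≤ y := by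
  nlinarith

lemma enorm_sq {n : ℕ} (x : EuclideanSpace ℝ (Fin n)) : ‖x‖ ^ 2 = ∑ i, x i ^ 2 := by
  rw [EuclideanSpace.norm_eq, Real.sq_sqrt (by positivity)]
  simp [sq_abs]

lemma specNorm_nonneg {n m : ℕ} (M : Matrix (Fin n) (Fin m) ℝ) : 0 ≤ specNorm M :=
  norm_nonneg _

lemma apply_le {n m : ℕ} (M : Matrix (Fin n) (Fin m) ℝ) (x : EuclideanSpace ℝ (Fin m)) :
    ‖Matrix.toEuclideanLin M x‖ ≤ specNorm M * ‖x‖ := by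
  have := (LinearMap.toContinuousLinearMap (Matrix.toEuclideanLin M)).le_opNorm x
  simpa [specNorm] using this

lemma specNorm_le {n m : ℕ} {M : Matrix (Fin n) (Fin m) ℝ} {K : ℝ} (hK : 0 ≤ K)
    (h : ∀ x : EuclideanSpace ℝ (Fin m), ‖Matrix.toEuclideanLin M x‖ ≤ K * ‖x‖) :
    specNorm M ≤ K := by
  apply ContinuousLinearMap.opNorm_le_bound _ hK
  intro x
  simpa using h x

lemma tEL_mul {n m k : ℕ} (M : Matrix (Fin n) (Fin m) ℝ) (N : Matrix (Fin m) (Fin k) ℝ)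
    (x : EuclideanSpace ℝ (Fin k)) :
    Matrix.toEuclideanLin (M * N) x = Matrix.toEuclideanLin M (Matrix.toEuclideanLin N x) := by
  simp [Matrix.toEuclideanLin_apply, Matrix.mulVec_mulVec]

lemma specNorm_mul_le {n m k : ℕ} (M : Matrix (Fin n) (Fin m) ℝ) (N : Matrix (Fin m) (Fin k) ℝ) :
    specNorm (M * N) ≤ specNorm M * specNorm N := by
  apply specNorm_le (mul_nonneg (specNorm_nonneg _) (specNorm_nonneg _))
  intro x
  rw [tEL_mul]
  calc ‖Matrix.toEuclideanLin M (Matrix.toEuclideanLin N x)‖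
      ≤ specNorm M * ‖Matrix.toEuclideanLin N x‖ := apply_le _ _
    _ ≤ specNorm M * (specNorm N * ‖x‖) :=
        mul_le_mul_of_nonneg_left (apply_le _ _) (specNorm_nonneg _)
    _ = specNorm M * specNorm N * ‖x‖ := by ring

-- dot product preservation
lemma dot_orth {m k : ℕ} {W : Matrix (Fin m) (Fin k) ℝ} (hW : Wᵀ * W = 1)
    (v : Fin k → ℝ) : (W *ᵥ v) ⬝ᵥ (W *ᵥ v) = v ⬝ᵥ v := by
  rw [Matrix.dotProduct_mulVec, ← Matrix.mulVec_transpose, Matrix.mulVec_mulVec, hW,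
    Matrix.one_mulVec]

lemma norm_tEL_orth {m k : ℕ} {W : Matrix (Fin m) (Fin k) ℝ} (hW : Wᵀ * W = 1)
    (x : EuclideanSpace ℝ (Fin k)) : ‖Matrix.toEuclideanLin W x‖ = ‖x‖ := by
  have h1 : ‖Matrix.toEuclideanLin W x‖ ^ 2 = ‖x‖ ^ 2 := by
    rw [enorm_sq, enorm_sq]
    have : ∀ (p : ℕ) (y : Fin p → ℝ), ∑ i, y i ^ 2 = y ⬝ᵥ y := by
      intro p y; simp [dotProduct, sq]
    set e : Fin k → ℝ := (WithLp.equiv 2 (Fin k → ℝ)) x with he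
    calc ∑ i, (Matrix.toEuclideanLin W x) i ^ 2
        = (W *ᵥ e) ⬝ᵥ (W *ᵥ e) := by
          rw [← this]; apply Finset.sum_congr rfl; intro i _
          simp [Matrix.toEuclideanLin_apply, he]
      _ = e ⬝ᵥ e := dot_orth hW _
      _ = ∑ i, x i ^ 2 := (this _ _).symm
  exact le_antisymm (le_of_sq_le_sq (norm_nonneg _) (norm_nonneg _) h1.le)
    (le_of_sq_le_sq (norm_nonneg _) (norm_nonneg _) h1.ge)

lemma specNorm_orth_mul {k m : ℕ} {W : Matrix (Fin k) (Fin k) ℝ} (hW : Wᵀ * W = 1)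
    (M : Matrix (Fin k) (Fin m) ℝ) : specNorm (W * M) = specNorm M := by
  have le1 : ∀ {m : ℕ} (W : Matrix (Fin k) (Fin k) ℝ), Wᵀ * W = 1 →
      ∀ M : Matrix (Fin k) (Fin m) ℝ, specNorm (W * M) ≤ specNorm M := by
    intro m W hW M
    apply specNorm_le (specNorm_nonneg _)
    intro x
    rw [tEL_mul, norm_tEL_orth hW]
    exact apply_le _ _
  refine le_antisymm (le1 W hW M) ?_
  have hWW : W * Wᵀ = 1 := mul_eq_one_comm.mp hW
  have : M = Wᵀ * (W * M) := by rw [← Matrix.mul_assoc, hW, Matrix.one_mul]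
  calc specNorm M = specNorm (Wᵀ * (W * M)) := by rw [← this]
    _ ≤ specNorm (W * M) := le1 Wᵀ (by rwa [Matrix.transpose_transpose]) _

lemma specNorm_mul_orth {k m : ℕ} {W : Matrix (Fin k) (Fin k) ℝ} (hW : Wᵀ * W = 1)
    (M : Matrix (Fin m) (Fin k) ℝ) : specNorm (M * Wᵀ) = specNorm M := by
  have hWW : W * Wᵀ = 1 := mul_eq_one_comm.mp hW
  have le1 : ∀ (U : Matrix (Fin k) (Fin k) ℝ), Uᵀ * U = 1 →
      ∀ N : Matrix (Fin m) (Fin k) ℝ, specNorm (N * Uᵀ) ≤ specNorm N := by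
    intro U hU N
    apply specNorm_le (specNorm_nonneg _)
    intro x
    rw [tEL_mul]
    calc ‖Matrix.toEuclideanLin N (Matrix.toEuclideanLin Uᵀ x)‖
        ≤ specNorm N * ‖Matrix.toEuclideanLin Uᵀ x‖ := apply_le _ _
      _ = specNorm N * ‖x‖ := by
          rw [norm_tEL_orth (by rwa [Matrix.transpose_transpose, mul_eq_one_comm])]
  refine le_antisymm (le1 W hW M) ?_
  have hM : M = (M * Wᵀ) * (Wᵀ)ᵀ := by
    rw [Matrix.transpose_transpose, Matrix.mul_assoc, hW, Matrix.mul_one]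
  calc specNorm M = specNorm ((M * Wᵀ) * (Wᵀ)ᵀ) := by rw [← hM]
    _ ≤ specNorm (M * Wᵀ) := le1 Wᵀ (by rwa [Matrix.transpose_transpose]) _

lemma specNorm_diag_le {k : ℕ} {f : Fin k → ℝ} {K : ℝ} (hK : 0 ≤ K)
    (h : ∀ i, |f i| ≤ K) : specNorm (Matrix.diagonal f) ≤ K := by
  apply specNorm_le hK
  intro x
  have hv : ∀ i, (Matrix.toEuclideanLin (Matrix.diagonal f) x) i = f i * x i := by
    intro i; simp [Matrix.toEuclideanLin_apply, Matrix.mulVec_diagonal]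
  apply le_of_sq_le_sq (norm_nonneg _) (by positivity)
  rw [enorm_sq, mul_pow, enorm_sq, Finset.mul_sum]
  apply Finset.sum_le_sum
  intro i _
  rw [hv, mul_pow]
  have : f i ^ 2 ≤ K ^ 2 := by
    rw [← sq_abs]; exact pow_le_pow_left₀ (abs_nonneg _) (h i) 2
  nlinarith [sq_nonneg (x i)]

lemma frobSq_nonneg {n m : ℕ} (M : Matrix (Fin n) (Fin m) ℝ) : 0 ≤ frobSq M := by
  unfold frobSq; positivity

lemma frobSq_transpose {n m : ℕ} (M : Matrix (Fin n) (Fin m) ℝ) : frobSq Mᵀ = frobSq M := by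
  unfold frobSq
  rw [Finset.sum_comm]
  simp [Matrix.transpose_apply]

lemma frobSq_orth_mul {k n m : ℕ} {W : Matrix (Fin k) (Fin n) ℝ} (hW : Wᵀ * W = 1)
    (M : Matrix (Fin n) (Fin m) ℝ) : frobSq (W * M) = frobSq M := by
  have hdot : ∀ (p q : ℕ) (y : Fin p → ℝ), (∑ i, y i ^ 2) = y ⬝ᵥ y := by
    intro p q y; simp [dotProduct, sq]
  have key : ∀ j, ∑ i, (W * M) i j ^ 2 = ∑ i, M i j ^ 2 := by
    intro j
    calc ∑ i, (W * M) i j ^ 2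
        = (W *ᵥ fun p => M p j) ⬝ᵥ (W *ᵥ fun p => M p j) := by
          rw [← hdot k 0]; apply Finset.sum_congr rfl; intro i _
          simp [Matrix.mul_apply, Matrix.mulVec, dotProduct]
      _ = (fun p => M p j) ⬝ᵥ (fun p => M p j) := dot_orth hW _
      _ = ∑ i, M i j ^ 2 := (hdot n 0 _).symm
  unfold frobSq
  rw [Finset.sum_comm, Finset.sum_comm (γ := Fin n) (f := fun i j => M i j ^ 2)]
  exact Finset.sum_congr rfl fun j _ => key j

lemma frobSq_mul_orth {k n m : ℕ} {W : Matrix (Fin k) (Fin n) ℝ} (hW : Wᵀ * W = 1)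
    (M : Matrix (Fin m) (Fin n) ℝ) : frobSq (M * Wᵀ) = frobSq M := by
  rw [← frobSq_transpose (M * Wᵀ), Matrix.transpose_mul, Matrix.transpose_transpose,
    frobSq_orth_mul hW, frobSq_transpose]

lemma sum_castLE {n s : ℕ} (hs : 0 < s) (h : s ≤ n) (g : Fin n → ℝ) :
    ∑ j' : Fin s, g (Fin.castLE h j') = ∑ j : Fin n, if j.val < s then g j else 0 := by
  rw [← Finset.sum_filter]
  refine Finset.sum_nbij' (i := fun j' => Fin.castLE h j')
    (j := fun j => ⟨min j.val (s-1), by omega⟩) ?_ ?_ ?_ ?_ ?_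
  · intro a _
    simp only [Finset.mem_filter, Finset.mem_univ, true_and]
    exact a.isLt
  · intro a _; exact Finset.mem_univ _
  · intro a _
    ext
    simp only [Fin.coe_castLE]
    omega
  · intro a ha
    have : a.val < s := (Finset.mem_filter.mp ha).2
    ext
    simp only [Fin.coe_castLE]
    omega
  · intro a _; rfl

lemma cauchy2 {K1 K2 u v T : ℝ} (hK1 : 0 ≤ K1) (hK2 : 0 ≤ K2) (hu : 0 ≤ u) (hv : 0 ≤ v)
    (hT : 0 ≤ T) (hsum : u ^ 2 + v ^ 2 = T ^ 2) :
    K1 * u + K2 * v ≤ Real.sqrt (K1 ^ 2 + K2 ^ 2) * T := by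
  have hS : Real.sqrt (K1 ^ 2 + K2 ^ 2) ^ 2 = K1 ^ 2 + K2 ^ 2 :=
    Real.sq_sqrt (by positivity)
  have hS0 : 0 ≤ Real.sqrt (K1 ^ 2 + K2 ^ 2) := Real.sqrt_nonneg _
  have hST : (Real.sqrt (K1 ^ 2 + K2 ^ 2) * T) ^ 2 = (K1 ^ 2 + K2 ^ 2) * (u ^ 2 + v ^ 2) := by
    rw [mul_pow, hS, hsum]
  have h1 : (K1 * u + K2 * v) ^ 2 ≤ (Real.sqrt (K1 ^ 2 + K2 ^ 2) * T) ^ 2 := by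
    nlinarith [sq_nonneg (K1 * v - K2 * u)]
  exact le_of_sq_le_sq (by positivity) (mul_nonneg hS0 hT) h1

lemma isUnit_of_rank_eq {s : ℕ} (Q : Matrix (Fin s) (Fin s) ℝ) (h : Q.rank = s) :
    IsUnit Q := by
  rw [← Matrix.mulVec_surjective_iff_isUnit]
  have htop : LinearMap.range Q.mulVecLin = ⊤ := by
    apply Submodule.eq_top_of_finrank_eq
    rw [show Module.finrank ℝ ↥(LinearMap.range Q.mulVecLin) = Q.rank from rfl, h]
    simp
  intro y
  have : y ∈ LinearMap.range Q.mulVecLin := htop ▸ Submodule.mem_top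
  obtain ⟨x, hx⟩ := this
  exact ⟨x, hx⟩

lemma tEL_apply_coord {m k : ℕ} (M : Matrix (Fin m) (Fin k) ℝ) (x : EuclideanSpace ℝ (Fin k))
    (i : Fin m) : (Matrix.toEuclideanLin M x) i = ∑ j, M i j * x j := by
  simp [Matrix.toEuclideanLin_apply, Matrix.mulVec, dotProduct]

lemma euclid_ext {k : ℕ} {u v : EuclideanSpace ℝ (Fin k)} (h : ∀ i, u i = v i) : u = v :=
  (WithLp.equiv 2 _).injective (funext h)


end PSBaux

open PSBaux in
set_option maxHeartbeats 2000000 in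
/-- Power-scheme low-rank approximation bound for an SPSD matrix `A`,
in both the spectral norm and the Frobenius norm. -/
theorem power_scheme_bound {n c s t : ℕ} (hs : 0 < s) (hsn : s < n) (ht : 1 ≤ t)
    (A : Matrix (Fin n) (Fin n) ℝ) (hA : A.PosSemidef)
    (V : Matrix (Fin n) (Fin n) ℝ) (hV : Vᵀ * V = 1)
    (σ : Fin n → ℝ) (hσ0 : ∀ i, 0 ≤ σ i) (hσmono : ∀ i j : Fin n, i ≤ j → σ j ≤ σ i)
    (hspec : A = V * diagonal σ * Vᵀ)
    (Vs : Matrix (Fin n) (Fin s) ℝ) (hVs : Vs = fun i j => V i (Fin.castLE hsn.le j))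
    (As : Matrix (Fin n) (Fin n) ℝ)
    (hAs : As = Vs * diagonal (fun j => σ (Fin.castLE hsn.le j)) * Vsᵀ)
    (P : Matrix (Fin n) (Fin c) ℝ) (hrank : (Pᵀ * Vs).rank = s)
    (Yd : Matrix (Fin c) (Fin s) ℝ) (hYd : IsMoorePenrose (Vsᵀ * P) Yd)
    (C : Matrix (Fin n) (Fin c) ℝ) (hC : C = A ^ t * P) :
    ∃ X : Matrix (Fin c) (Fin n) ℝ, X.rank ≤ s ∧
      specNorm (A - C * X) ^ 2 ≤
        specNorm (A - As) ^ 2 +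
          ((σ ⟨s, hsn⟩ ^ 2 / σ ⟨s - 1, by omega⟩ ^ 2) ^ (t - 1)) *
            specNorm ((A - As) * P * Yd) ^ 2 ∧
      frobSq (A - C * X) ≤
        frobSq (A - As) +
          ((σ ⟨s, hsn⟩ ^ 2 / σ ⟨s - 1, by omega⟩ ^ 2) ^ (t - 1)) *
            frobSq ((A - As) * P * Yd) := by
  classical
  have hsnle : s ≤ n := hsn.le
  set a : ℝ := σ ⟨s, hsn⟩ with ha
  set b : ℝ := σ ⟨s - 1, by omega⟩ with hb
  set cfa : ℝ := (a / b) ^ (t - 1) with hcfa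
  set J : Matrix (Fin n) (Fin s) ℝ :=
    Matrix.of (fun i j' => if i = Fin.castLE hsnle j' then (1 : ℝ) else 0) with hJ
  set Dt : Matrix (Fin n) (Fin n) ℝ := diagonal (fun i => σ i ^ t) with hDt
  set σ1 : Fin n → ℝ := fun i => if (i : ℕ) < s then σ i else 0 with hσ1
  set σ2 : Fin n → ℝ := fun i => if (i : ℕ) < s then 0 else σ i with hσ2
  set δ : Fin n → ℝ := fun i => if (i : ℕ) < s then 0 else σ i ^ (t - 1) with hδ
  set d : Fin s → ℝ :=
    fun j' => σ (Fin.castLE hsnle j') / σ (Fin.castLE hsnle j') ^ t with hd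
  set D1 : Matrix (Fin n) (Fin n) ℝ := diagonal σ1 with hD1
  set D2 : Matrix (Fin n) (Fin n) ℝ := diagonal σ2 with hD2
  set D2' : Matrix (Fin n) (Fin n) ℝ := diagonal δ with hD2'
  set Dd : Matrix (Fin s) (Fin s) ℝ := diagonal d with hDd
  set B : Matrix (Fin n) (Fin s) ℝ := Vᵀ * P * Yd with hB
  set Fm : Matrix (Fin n) (Fin s) ℝ := D2 * B with hFm
  set E : Matrix (Fin n) (Fin s) ℝ := Dt * (B - J) * Dd with hE
  set X : Matrix (Fin c) (Fin n) ℝ := Yd * Dd * (Jᵀ * Vᵀ) with hX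
  have hVV' : V * Vᵀ = 1 := mul_eq_one_comm.mp hV
  -- Vs = V * J
  have hVsJ : Vs = V * J := by
    rw [hVs]
    ext i j'
    simp [Matrix.mul_apply, hJ, Finset.sum_ite_eq', mul_ite]
  -- Jᵀ J = 1
  have hJJ : Jᵀ * J = 1 := by
    ext p q
    simp only [Matrix.mul_apply, Matrix.transpose_apply, hJ, Matrix.of_apply,
      Matrix.one_apply, ite_mul, one_mul, zero_mul]
    rw [Finset.sum_ite_eq' Finset.univ (Fin.castLE hsnle p)]
    simp [Fin.castLE_inj]
  -- Fact 1 : Jᵀ B = 1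
  have hM : Vsᵀ * P = Jᵀ * (Vᵀ * P) := by
    rw [hVsJ, Matrix.transpose_mul, Matrix.mul_assoc]
  have hMrank : (Vsᵀ * P).rank = s := by
    have h1 : (Pᵀ * Vs)ᵀ = Vsᵀ * P := by
      rw [Matrix.transpose_mul, Matrix.transpose_transpose]
    rw [← h1, Matrix.rank_transpose, hrank]
  set Q : Matrix (Fin s) (Fin s) ℝ := (Vsᵀ * P) * Yd with hQ
  have hQM : Q * (Vsᵀ * P) = Vsᵀ * P := hYd.1
  have hQrank : Q.rank = s := by
    refine le_antisymm ((Matrix.rank_le_card_width Q).trans (by simp)) ?_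
    calc s = (Vsᵀ * P).rank := hMrank.symm
      _ = (Q * (Vsᵀ * P)).rank := by rw [hQM]
      _ ≤ Q.rank := Matrix.rank_mul_le_left _ _
  have hQQ : Q * Q = Q := by
    calc Q * Q = ((Vsᵀ * P) * Yd * (Vsᵀ * P)) * Yd := by
          rw [hQ, ← Matrix.mul_assoc]
      _ = Q := by rw [hYd.1]
  have hQ1 : Q = 1 := by
    obtain ⟨R, hR⟩ := (isUnit_of_rank_eq Q hQrank).exists_right_inv
    calc Q = (Q * Q) * R := by rw [Matrix.mul_assoc, hR, Matrix.mul_one]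
      _ = Q * R := by rw [hQQ]
      _ = 1 := hR
  have Fact1 : Jᵀ * B = 1 := by
    rw [hB, ← Matrix.mul_assoc, ← hM]
    exact hQ1
  -- rows < s of B - J vanish
  have Blow : ∀ (i : Fin n) (j' : Fin s), (i : ℕ) < s → (B - J) i j' = 0 := by
    intro i j' hi
    have hcast : Fin.castLE hsnle ⟨(i : ℕ), hi⟩ = i := by ext; simp
    have h1 : (Jᵀ * B) ⟨(i : ℕ), hi⟩ j' = B i j' := by
      simp only [Matrix.mul_apply, Matrix.transpose_apply, hJ, Matrix.of_apply, ite_mul,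
        one_mul, zero_mul]
      rw [Finset.sum_ite_eq' Finset.univ (Fin.castLE hsnle ⟨(i : ℕ), hi⟩)]
      simp [hcast]
    have h2 : B i j' = if (i : ℕ) = (j' : ℕ) then 1 else 0 := by
      rw [← h1, Fact1, Matrix.one_apply]
      simp [Fin.ext_iff]
    have h3 : J i j' = if (i : ℕ) = (j' : ℕ) then 1 else 0 := by
      simp [hJ, Fin.ext_iff]
    simp [Matrix.sub_apply, h2, h3]
  -- J diag Jᵀ
  have hJdJ : ∀ g : Fin s → ℝ, J * diagonal g * Jᵀ =
      diagonal (fun i : Fin n => if h : (i : ℕ) < s then g ⟨(i : ℕ), h⟩ else 0) := by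
    intro g
    ext i k
    rw [Matrix.mul_apply]
    by_cases hi : (i : ℕ) < s
    · rw [Finset.sum_eq_single (⟨(i : ℕ), hi⟩ : Fin s)]
      · have hcast : Fin.castLE hsnle ⟨(i : ℕ), hi⟩ = i := by ext; simp
        simp only [Matrix.mul_diagonal, hJ, Matrix.of_apply, Matrix.transpose_apply,
          Matrix.diagonal_apply, hcast]
        by_cases hik : i = k
        · subst hik; simp [hi]
        · have : ¬ k = i := fun h => hik h.symm
          simp [hik, this, hi]
      · intro j' _ hj'
        have : ¬ i = Fin.castLE hsnle j' := by
          intro h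
          apply hj'
          ext
          simp [h]
        simp [Matrix.mul_diagonal, hJ, this]
      · intro h
        exact absurd (Finset.mem_univ _) h
    · have hz : ∀ j' : Fin s, (J * diagonal g) i j' * Jᵀ j' k = 0 := by
        intro j'
        have : ¬ i = Fin.castLE hsnle j' := by
          intro h
          apply hi
          rw [h]
          simp [j'.isLt]
        simp [Matrix.mul_diagonal, hJ, this]
      rw [Finset.sum_eq_zero (fun j' _ => hz j')]
      simp [Matrix.diagonal_apply, hi]
  -- A ^ t
  have hApow : A ^ t = V * Dt * Vᵀ := by
    have key : ∀ k : ℕ, A ^ k = V * diagonal (fun i => σ i ^ k) * Vᵀ := by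
      intro k
      induction k with
      | zero =>
        have h1 : diagonal (fun i : Fin n => σ i ^ 0) = (1 : Matrix (Fin n) (Fin n) ℝ) := by
          ext i j
          simp [Matrix.diagonal_apply, Matrix.one_apply]
        rw [pow_zero, h1, Matrix.mul_one, hVV']
      | succ k ih =>
        rw [pow_succ, ih, hspec]
        calc V * diagonal (fun i => σ i ^ k) * Vᵀ * (V * diagonal σ * Vᵀ)
            = V * diagonal (fun i => σ i ^ k) * (Vᵀ * V) * diagonal σ * Vᵀ := by
              simp only [Matrix.mul_assoc]
          _ = V * (diagonal (fun i => σ i ^ k) * diagonal σ) * Vᵀ := by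
              rw [hV, Matrix.mul_one]
              simp only [Matrix.mul_assoc]
          _ = V * diagonal (fun i => σ i ^ (k + 1)) * Vᵀ := by
              have hfun : (fun i : Fin n => σ i ^ k * σ i) = fun i => σ i ^ (k + 1) := by
                funext i
                rw [pow_succ]
              rw [Matrix.diagonal_mul_diagonal, hfun]
    rw [key t, hDt]
  -- As = V D1 Vᵀ
  have hAsD : As = V * D1 * Vᵀ := by
    have h1 : J * diagonal (fun j' => σ (Fin.castLE hsnle j')) * Jᵀ = D1 := by
      rw [hJdJ, hD1]
      have hfun : (fun i : Fin n => if h : (i : ℕ) < s then σ (Fin.castLE hsnle ⟨(i : ℕ), h⟩) else 0) = σ1 := by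
        funext i
        by_cases h : (i : ℕ) < s
        · have hcast : Fin.castLE hsnle ⟨(i : ℕ), h⟩ = i := by ext; simp
          simp [h, hcast, hσ1]
        · simp [h, hσ1]
      rw [hfun]
    rw [hAs, hVsJ, Matrix.transpose_mul, ← h1]
    simp only [Matrix.mul_assoc]
  have hσsplit : diagonal σ = D1 + D2 := by
    have hfun : (fun i => σ1 i + σ2 i) = σ := by
      funext i
      by_cases h : (i : ℕ) < s <;> simp [hσ1, hσ2, h]
    rw [hD1, hD2, Matrix.diagonal_add, hfun]
  have hAAs : A - As = V * D2 * Vᵀ := by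
    rw [hspec, hAsD, hσsplit, Matrix.mul_add, Matrix.add_mul]
    abel
  have hPA : (A - As) * P * Yd = V * Fm := by
    rw [hAAs, hFm, hB]
    simp only [Matrix.mul_assoc]
  -- main identity
  have hmid : Dt * (J * (Dd * Jᵀ)) = D1 := by
    rw [← Matrix.mul_assoc J Dd, hJdJ d, hDt, Matrix.diagonal_mul_diagonal, hD1]
    have hfun : (fun i : Fin n => σ i ^ t * if h : (i : ℕ) < s then d ⟨(i : ℕ), h⟩ else 0) = σ1 := by
      funext i
      by_cases h : (i : ℕ) < s
      · have hcast : Fin.castLE hsnle ⟨(i : ℕ), h⟩ = i := by ext; simp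
        simp only [h, dif_pos, hd, hcast, hσ1, if_pos]
        by_cases h0 : σ i = 0
        · simp [h0]
        · field_simp
      · simp [h, hσ1]
    rw [hfun]
  have hCX : C * X = V * (E * Jᵀ + D1) * Vᵀ := by
    have h1 : C * X = V * (Dt * (B * (Dd * Jᵀ))) * Vᵀ := by
      rw [hC, hApow, hX, hB]
      simp only [Matrix.mul_assoc]
    have h2 : Dt * (B * (Dd * Jᵀ)) = E * Jᵀ + D1 := by
      have hBsplit : B = (B - J) + J := by abel
      calc Dt * (B * (Dd * Jᵀ))
          = Dt * (((B - J) + J) * (Dd * Jᵀ)) := by rw [← hBsplit]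
        _ = Dt * ((B - J) * (Dd * Jᵀ)) + Dt * (J * (Dd * Jᵀ)) := by
            rw [Matrix.add_mul, Matrix.mul_add]
        _ = E * Jᵀ + D1 := by
            rw [hmid, hE]
            simp only [Matrix.mul_assoc]
    rw [h1, h2]
  have hmain : A - C * X = V * (D2 - E * Jᵀ) * Vᵀ := by
    rw [hspec, hCX, hσsplit]
    rw [Matrix.mul_add V D1 D2, Matrix.mul_add V (E * Jᵀ) D1, Matrix.mul_sub V D2 (E * Jᵀ),
      Matrix.add_mul, Matrix.add_mul, Matrix.sub_mul]
    abel
  -- E alternative form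
  have hEalt : E = D2' * Fm * Dd := by
    rw [hE, hFm, hDt, hD2', hD2, hDd]
    ext i j'
    rw [Matrix.mul_diagonal, Matrix.mul_diagonal, Matrix.diagonal_mul, Matrix.diagonal_mul,
      Matrix.diagonal_mul]
    by_cases hi : (i : ℕ) < s
    · rw [Blow i j' hi]
      simp [hδ, hi]
    · have hJ0 : J i j' = 0 := by
        have hne : ¬ i = Fin.castLE hsnle j' := by
          intro h
          apply hi
          rw [h]
          simp [j'.isLt]
        simp [hJ, hne]
      rw [Matrix.sub_apply, hJ0, sub_zero]
      simp only [hδ, hσ2, if_neg hi]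
      have hpow : σ i ^ t = σ i ^ (t - 1) * σ i := by
        conv_lhs => rw [show t = (t - 1) + 1 by omega]
        rw [pow_succ]
      rw [hpow]
      ring
  -- pointwise bounds
  have hd0 : ∀ j', 0 ≤ d j' := by
    intro j'
    simp only [hd]
    exact div_nonneg (hσ0 _) (pow_nonneg (hσ0 _) _)
  have hδ0 : ∀ i, 0 ≤ δ i := by
    intro i
    by_cases h : (i : ℕ) < s
    · simp [hδ, h]
    · simp only [hδ, if_neg h]
      exact pow_nonneg (hσ0 _) _
  have hb0 : 0 ≤ b := hσ0 _
  have ha0 : 0 ≤ a := hσ0 _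
  have hab : a ≤ b := by
    rw [ha, hb]
    exact hσmono ⟨s - 1, by omega⟩ ⟨s, hsn⟩ (Fin.le_def.mpr (show s - 1 ≤ s by omega))
  have hcfa0 : 0 ≤ cfa := by
    rw [hcfa]
    positivity
  have hptw : ∀ (i : Fin n) (j' : Fin s), δ i * d j' ≤ cfa := by
    intro i j'
    by_cases hi : (i : ℕ) < s
    · have h0 : δ i = 0 := by simp [hδ, hi]
      rw [h0, zero_mul]
      exact hcfa0
    · have hδi : δ i = σ i ^ (t - 1) := by simp [hδ, hi]
      by_cases hj0 : σ (Fin.castLE hsnle j') = 0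
      · have h0 : d j' = 0 := by simp [hd, hj0]
        rw [h0, mul_zero]
        exact hcfa0
      · have hia : σ i ≤ a := by
          rw [ha]
          exact hσmono ⟨s, hsn⟩ i (Fin.le_def.mpr (show s ≤ (i : ℕ) by omega))
        have hjb : b ≤ σ (Fin.castLE hsnle j') := by
          rw [hb]
          exact hσmono (Fin.castLE hsnle j') ⟨s - 1, by omega⟩
            (Fin.le_def.mpr (show (j' : ℕ) ≤ s - 1 by have := j'.isLt; omega))
        by_cases ht1 : t = 1
        · subst ht1
          have h1 : cfa = 1 := by rw [hcfa]; norm_num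
          have h2 : δ i = 1 := by rw [hδi]; norm_num
          have h3 : d j' = 1 := by
            simp only [hd, pow_one]
            exact div_self hj0
          rw [h1, h2, h3, one_mul]
        · by_cases hbz : b = 0
          · have haz : a = 0 := le_antisymm (hbz ▸ hab) ha0
            have hiz : σ i = 0 := le_antisymm (haz ▸ hia) (hσ0 i)
            rw [hδi, hiz, zero_pow (by omega), zero_mul]
            exact hcfa0
          · have hbpos : 0 < b := lt_of_le_of_ne hb0 (Ne.symm hbz)
            have hjpos : 0 < σ (Fin.castLE hsnle j') :=
              lt_of_le_of_ne (hσ0 _) (Ne.symm hj0)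
            have h5 : d j' = 1 / σ (Fin.castLE hsnle j') ^ (t - 1) := by
              have hsplit : σ (Fin.castLE hsnle j') ^ t
                  = σ (Fin.castLE hsnle j') * σ (Fin.castLE hsnle j') ^ (t - 1) := by
                conv_lhs => rw [show t = 1 + (t - 1) by omega]
                rw [pow_add, pow_one]
              simp only [hd]
              rw [hsplit]
              field_simp
            rw [hδi, h5, hcfa, mul_one_div, ← div_pow]
            exact pow_le_pow_left₀ (div_nonneg (hσ0 i) (hσ0 _))
              (div_le_div₀ ha0 hia hbpos hjb) _
  haveI instn : Nonempty (Fin n) := ⟨⟨0, by omega⟩⟩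
  haveI insts : Nonempty (Fin s) := ⟨⟨0, hs⟩⟩
  -- spectral bound on E
  have hspecE : specNorm E ≤ cfa * specNorm Fm := by
    obtain ⟨i₀, -, hi₀⟩ := Finset.exists_max_image (Finset.univ : Finset (Fin n)) δ
      Finset.univ_nonempty
    obtain ⟨j₀, -, hj₀⟩ := Finset.exists_max_image (Finset.univ : Finset (Fin s)) d
      Finset.univ_nonempty
    have h1 : specNorm D2' ≤ δ i₀ := by
      rw [hD2']
      exact specNorm_diag_le (hδ0 i₀)
        (fun i => by rw [abs_of_nonneg (hδ0 i)]; exact hi₀ i (Finset.mem_univ i))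
    have h2 : specNorm Dd ≤ d j₀ := by
      rw [hDd]
      exact specNorm_diag_le (hd0 j₀)
        (fun j' => by rw [abs_of_nonneg (hd0 j')]; exact hj₀ j' (Finset.mem_univ j'))
    calc specNorm E = specNorm (D2' * Fm * Dd) := by rw [hEalt]
      _ ≤ specNorm (D2' * Fm) * specNorm Dd := specNorm_mul_le _ _
      _ ≤ (specNorm D2' * specNorm Fm) * specNorm Dd :=
          mul_le_mul_of_nonneg_right (specNorm_mul_le _ _) (specNorm_nonneg _)
      _ ≤ (δ i₀ * specNorm Fm) * specNorm Dd := by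
          apply mul_le_mul_of_nonneg_right _ (specNorm_nonneg _)
          exact mul_le_mul_of_nonneg_right h1 (specNorm_nonneg _)
      _ ≤ (δ i₀ * specNorm Fm) * d j₀ := by
          apply mul_le_mul_of_nonneg_left h2
          exact mul_nonneg (hδ0 i₀) (specNorm_nonneg _)
      _ = (δ i₀ * d j₀) * specNorm Fm := by ring
      _ ≤ cfa * specNorm Fm :=
          mul_le_mul_of_nonneg_right (hptw i₀ j₀) (specNorm_nonneg _)
  -- Frobenius bound on E
  have hfrobE : frobSq E ≤ cfa ^ 2 * frobSq Fm := by
    rw [hEalt]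
    have hent : ∀ (i : Fin n) (j' : Fin s), (D2' * Fm * Dd) i j' = δ i * Fm i j' * d j' := by
      intro i j'
      rw [hDd, Matrix.mul_diagonal, hD2', Matrix.diagonal_mul]
    unfold frobSq
    rw [Finset.mul_sum]
    apply Finset.sum_le_sum
    intro i _
    rw [Finset.mul_sum]
    apply Finset.sum_le_sum
    intro j' _
    rw [hent i j']
    have h1 : 0 ≤ δ i * d j' := mul_nonneg (hδ0 i) (hd0 j')
    have h2 : (δ i * d j') ^ 2 ≤ cfa ^ 2 := pow_le_pow_left₀ h1 (hptw i j') 2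
    nlinarith [sq_nonneg (Fm i j'), sq_nonneg (δ i * d j'), h2]
  -- coordinates of diagonal action
  have hcoord : ∀ (y : EuclideanSpace ℝ (Fin n)) (i : Fin n),
      (Matrix.toEuclideanLin D2 y) i = σ2 i * y i := by
    intro y i
    rw [tEL_apply_coord, hD2]
    simp [Matrix.diagonal_apply, ite_mul, Finset.sum_ite_eq]
  have hJcoord : ∀ (x : EuclideanSpace ℝ (Fin n)) (j' : Fin s),
      (Matrix.toEuclideanLin Jᵀ x) j' = x (Fin.castLE hsnle j') := by
    intro x j'
    rw [tEL_apply_coord]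
    simp [hJ, Matrix.transpose_apply, ite_mul, Finset.sum_ite_eq']
  -- spectral split
  have hspecsplit : specNorm (D2 - E * Jᵀ) ^ 2 ≤ specNorm D2 ^ 2 + specNorm E ^ 2 := by
    have key : specNorm (D2 - E * Jᵀ) ≤ Real.sqrt (specNorm D2 ^ 2 + specNorm E ^ 2) := by
      apply specNorm_le (Real.sqrt_nonneg _)
      intro x
      set x2 : EuclideanSpace ℝ (Fin n) :=
        (WithLp.toLp 2 (fun j : Fin n => if s ≤ (j : ℕ) then x j else 0) : EuclideanSpace ℝ (Fin n)) with hx2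
      have hD2x : Matrix.toEuclideanLin D2 x = Matrix.toEuclideanLin D2 x2 := by
        apply euclid_ext
        intro i
        rw [hcoord, hcoord]
        by_cases h : s ≤ (i : ℕ)
        · have : x2 i = x i := by rw [hx2]; simp [h]
          rw [this]
        · have h0 : σ2 i = 0 := by simp [hσ2]; omega
          rw [h0, zero_mul, zero_mul]
      have hnsplit : ‖x2‖ ^ 2 + ‖Matrix.toEuclideanLin Jᵀ x‖ ^ 2 = ‖x‖ ^ 2 := by
        rw [enorm_sq, enorm_sq, enorm_sq]
        have h2 : ∑ j', (Matrix.toEuclideanLin Jᵀ x) j' ^ 2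
            = ∑ j : Fin n, if (j : ℕ) < s then x j ^ 2 else 0 := by
          rw [← sum_castLE hs hsnle (fun j => x j ^ 2)]
          exact Finset.sum_congr rfl (fun j' _ => by rw [hJcoord])
        rw [h2, ← Finset.sum_add_distrib]
        apply Finset.sum_congr rfl
        intro j _
        by_cases h : (j : ℕ) < s
        · have : x2 j = 0 := by rw [hx2]; simp; omega
          rw [this, if_pos h]
          ring
        · have : x2 j = x j := by rw [hx2]; simp; omega
          rw [this, if_neg h]
          ring
      have hsub : Matrix.toEuclideanLin (D2 - E * Jᵀ) x
          = Matrix.toEuclideanLin D2 x - Matrix.toEuclideanLin (E * Jᵀ) x := by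
        rw [map_sub]
        rfl
      calc ‖Matrix.toEuclideanLin (D2 - E * Jᵀ) x‖
          ≤ ‖Matrix.toEuclideanLin D2 x‖ + ‖Matrix.toEuclideanLin (E * Jᵀ) x‖ := by
            rw [hsub]; exact norm_sub_le _ _
        _ ≤ specNorm D2 * ‖x2‖ + specNorm E * ‖Matrix.toEuclideanLin Jᵀ x‖ := by
            apply add_le_add
            · rw [hD2x]; exact apply_le _ _
            · rw [tEL_mul]; exact apply_le _ _
        _ ≤ Real.sqrt (specNorm D2 ^ 2 + specNorm E ^ 2) * ‖x‖ :=
            cauchy2 (specNorm_nonneg _) (specNorm_nonneg _) (norm_nonneg _)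
              (norm_nonneg _) (norm_nonneg _) hnsplit
    have h2 := pow_le_pow_left₀ (specNorm_nonneg _) key 2
    rwa [Real.sq_sqrt (by positivity)] at h2
  -- Frobenius split
  have hfrobsplit : frobSq (D2 - E * Jᵀ) ≤ frobSq D2 + frobSq E := by
    have hEJ : frobSq (E * Jᵀ) = frobSq E := frobSq_mul_orth hJJ E
    rw [← hEJ]
    have hzero : ∀ (i j : Fin n), D2 i j * (E * Jᵀ) i j = 0 := by
      intro i j
      by_cases hj : (j : ℕ) < s
      · have h0 : D2 i j = 0 := by
          rw [hD2]
          by_cases hij : i = j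
          · subst hij; simp [Matrix.diagonal_apply, hσ2, hj]
          · simp [Matrix.diagonal_apply, hij]
        rw [h0, zero_mul]
      · have h0 : (E * Jᵀ) i j = 0 := by
          rw [Matrix.mul_apply]
          apply Finset.sum_eq_zero
          intro j' _
          have hne : ¬ j = Fin.castLE hsnle j' := by
            intro h
            apply hj
            rw [h]
            simp [j'.isLt]
          simp [hJ, Matrix.transpose_apply, hne]
        rw [h0, mul_zero]
    apply le_of_eq
    unfold frobSq
    rw [← Finset.sum_add_distrib]
    apply Finset.sum_congr rfl
    intro i _
    rw [← Finset.sum_add_distrib]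
    apply Finset.sum_congr rfl
    intro j _
    have h0 := hzero i j
    rw [Matrix.sub_apply]
    linear_combination (-2 : ℝ) * h0
  -- orthogonal invariance
  have einv1 : specNorm (A - C * X) = specNorm (D2 - E * Jᵀ) := by
    rw [hmain, specNorm_mul_orth hV, specNorm_orth_mul hV]
  have einv2 : specNorm (A - As) = specNorm D2 := by
    rw [hAAs, specNorm_mul_orth hV, specNorm_orth_mul hV]
  have einv3 : specNorm ((A - As) * P * Yd) = specNorm Fm := by
    rw [hPA, specNorm_orth_mul hV]
  have finv1 : frobSq (A - C * X) = frobSq (D2 - E * Jᵀ) := by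
    rw [hmain, frobSq_mul_orth hV, frobSq_orth_mul hV]
  have finv2 : frobSq (A - As) = frobSq D2 := by
    rw [hAAs, frobSq_mul_orth hV, frobSq_orth_mul hV]
  have finv3 : frobSq ((A - As) * P * Yd) = frobSq Fm := by
    rw [hPA, frobSq_orth_mul hV]
  have hco : cfa ^ 2 = (a ^ 2 / b ^ 2) ^ (t - 1) := by
    rw [hcfa, ← pow_mul, mul_comm (t - 1) 2, pow_mul, div_pow]
  refine ⟨X, ?_, ?_, ?_⟩
  · rw [hX]
    calc (Yd * Dd * (Jᵀ * Vᵀ)).rank ≤ (Yd * Dd).rank := Matrix.rank_mul_le_left _ _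
      _ ≤ Fintype.card (Fin s) := Matrix.rank_le_card_width _
      _ = s := Fintype.card_fin s
  · rw [einv1, einv2, einv3]
    have h2 : specNorm E ^ 2 ≤ (a ^ 2 / b ^ 2) ^ (t - 1) * specNorm Fm ^ 2 := by
      have h3 := pow_le_pow_left₀ (specNorm_nonneg E) hspecE 2
      calc specNorm E ^ 2 ≤ (cfa * specNorm Fm) ^ 2 := h3
        _ = cfa ^ 2 * specNorm Fm ^ 2 := by ring
        _ = (a ^ 2 / b ^ 2) ^ (t - 1) * specNorm Fm ^ 2 := by rw [hco]
    linarith [hspecsplit]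
  · rw [finv1, finv2, finv3]
    have h2 : frobSq E ≤ (a ^ 2 / b ^ 2) ^ (t - 1) * frobSq Fm := by
      rw [← hco]
      exact hfrobE
    linarith [hfrobsplit]
end

section
/- Fix A ∈ ℝ^{n×d} and suppose B ∈ ℝ^{n×s} satisfies, for constants ε₁, ε₂ ∈ (0,1) and some α ≥ 0 independent of Π, that (1−ε₁)‖A − ΠA‖_F² ≤ ‖B − ΠB‖_F² + α ≤ (1+ε₂)‖A − ΠA‖_F² for every rank-k orthogonal projection Π. Let X̃_B be a cluster indicator matrix with ‖B − X̃_B X̃_Bᵀ B‖_F² ≤ γ · min over cluster indicator matrices X of ‖B − XXᵀB‖_F². Then ‖A − X̃_B X̃_Bᵀ A‖_F² ≤ γ · (1+ε₂)/(1−ε₁) · min over cluster indicator matrices X of ‖A − XXᵀA‖_F². -/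
open Matrix

def IsOrthProj {n : ℕ} (M : Matrix (Fin n) (Fin n) ℝ) : Prop :=
  Mᵀ = M ∧ M * M = M

/-- `X` is the cluster indicator matrix of some `k`-partition of `{1,…,n}`
(with all clusters nonempty): `X i j = 1/√|J_j|` if `i ∈ J_j`, else `0`. -/
def IsClusterIndicator {n k : ℕ} (X : Matrix (Fin n) (Fin k) ℝ) : Prop :=
  ∃ J : Fin n → Fin k, Function.Surjective J ∧
    ∀ i j, X i j =
      if J i = j then 1 / Real.sqrt ((Finset.univ.filter fun i' => J i' = j).card) else 0

lemma cluster_orthonormal {n k : ℕ} (X : Matrix (Fin n) (Fin k) ℝ)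
    (h : IsClusterIndicator X) : Xᵀ * X = 1 := by
  obtain ⟨J, hsurj, hX⟩ := h
  ext j j'
  simp only [Matrix.mul_apply, Matrix.transpose_apply, Matrix.one_apply]
  by_cases hjj : j = j'
  · subst hjj
    rw [if_pos rfl]
    have hc : 0 < ((Finset.univ.filter fun i' => J i' = j).card : ℝ) := by
      obtain ⟨i, hi⟩ := hsurj j
      exact_mod_cast Finset.card_pos.mpr ⟨i, by simp [hi]⟩
    calc ∑ i, X i j * X i j
        = ∑ i ∈ Finset.univ.filter (fun i' => J i' = j),
            (1 / Real.sqrt ((Finset.univ.filter fun i' => J i' = j).card)) ^ 2 := by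
          rw [Finset.sum_filter]
          refine Finset.sum_congr rfl fun i _ => ?_
          rw [hX i j]
          by_cases h' : J i = j <;> simp [h', sq]
      _ = 1 := by
          rw [Finset.sum_const, nsmul_eq_mul, div_pow, one_pow, Real.sq_sqrt hc.le]
          field_simp
  · rw [if_neg hjj]
    refine Finset.sum_eq_zero fun i _ => ?_
    rw [hX i j, hX i j']
    by_cases h1 : J i = j
    · rw [if_neg fun h2 => hjj (h1.symm.trans h2), mul_zero]
    · rw [if_neg h1, zero_mul]

lemma cluster_proj {n k : ℕ} (X : Matrix (Fin n) (Fin k) ℝ)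
    (h : IsClusterIndicator X) : IsOrthProj (X * Xᵀ) ∧ (X * Xᵀ).rank = k := by
  have h1 : Xᵀ * X = 1 := cluster_orthonormal X h
  refine ⟨⟨by simp [Matrix.transpose_mul], ?_⟩, ?_⟩
  · rw [Matrix.mul_assoc, ← Matrix.mul_assoc Xᵀ X Xᵀ, h1, Matrix.one_mul]
  · rw [Matrix.rank_self_mul_transpose]
    have h2 : (Xᵀ * X).rank = X.rank := Matrix.rank_transpose_mul_self X
    rw [h1, Matrix.rank_one] at h2
    simpa using h2.symm

lemma frobSq_nonneg {n m : ℕ} (A : Matrix (Fin n) (Fin m) ℝ) : 0 ≤ frobSq A :=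
  Finset.sum_nonneg fun _ _ => Finset.sum_nonneg fun _ _ => sq_nonneg _

/-- Projection-cost preservation implies approximate clustering:
if `B` is a projection-cost preserving sketch of `A` and `X̃B` is a `γ`-approximate
k-means solution on `B`, then `X̃B` is a `γ(1+ε₂)/(1−ε₁)`-approximate solution on `A`. -/
theorem pcp_implies_approx_kmeans {n d s k : ℕ}
    (ε₁ ε₂ : ℝ) (hε₁ : ε₁ ∈ Set.Ioo (0 : ℝ) 1) (hε₂ : ε₂ ∈ Set.Ioo (0 : ℝ) 1)
    (γ : ℝ) (hγ : 1 ≤ γ) (α : ℝ) (hα : 0 ≤ α)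
    (A : Matrix (Fin n) (Fin d) ℝ) (B : Matrix (Fin n) (Fin s) ℝ)
    (hPCP : ∀ Pr : Matrix (Fin n) (Fin n) ℝ, IsOrthProj Pr → Pr.rank = k →
      (1 - ε₁) * frobSq (A - Pr * A) ≤ frobSq (B - Pr * B) + α ∧
      frobSq (B - Pr * B) + α ≤ (1 + ε₂) * frobSq (A - Pr * A))
    (XB : Matrix (Fin n) (Fin k) ℝ) (hXB : IsClusterIndicator XB)
    (happrox : ∀ X : Matrix (Fin n) (Fin k) ℝ, IsClusterIndicator X →
      frobSq (B - XB * XBᵀ * B) ≤ γ * frobSq (B - X * Xᵀ * B)) :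
    ∀ X : Matrix (Fin n) (Fin k) ℝ, IsClusterIndicator X →
      frobSq (A - XB * XBᵀ * A) ≤
        γ * ((1 + ε₂) / (1 - ε₁)) * frobSq (A - X * Xᵀ * A) := by
  intro X hX
  obtain ⟨hPB, hrB⟩ := cluster_proj XB hXB
  obtain ⟨hPX, hrX⟩ := cluster_proj X hX
  obtain ⟨hB1, hB2⟩ := hPCP (XB * XBᵀ) hPB hrB
  obtain ⟨hX1, hX2⟩ := hPCP (X * Xᵀ) hPX hrX
  have ha := happrox X hX
  have h1ε : 0 < 1 - ε₁ := by linarith [hε₁.2]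
  have hγ0 : 0 ≤ γ := by linarith
  have key : (1 - ε₁) * frobSq (A - XB * XBᵀ * A) ≤
      γ * (1 + ε₂) * frobSq (A - X * Xᵀ * A) := by
    have h4 : γ * (frobSq (B - X * Xᵀ * B) + α) ≤
        γ * ((1 + ε₂) * frobSq (A - X * Xᵀ * A)) :=
      mul_le_mul_of_nonneg_left hX2 hγ0
    nlinarith [frobSq_nonneg (B - X * Xᵀ * B)]
  rw [show γ * ((1 + ε₂) / (1 - ε₁)) * frobSq (A - X * Xᵀ * A) =
      (γ * (1 + ε₂) * frobSq (A - X * Xᵀ * A)) / (1 - ε₁) by ring,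
    le_div_iff₀ h1ε]
  linarith
end

section
/- Let K be an SPSD n×n matrix and let M be an n×n orthogonal projection matrix. Then tr((I − Π) K^{1/2}(I − M)K^{1/2}(I − Π)) = ‖(I − Π)K^{1/2}(I − M)‖_F² ≥ ‖K^{1/2} − (K^{1/2})_{s+k}‖_F² for any orthogonal projections Π of rank k and M of rank s. -/
open Matrix

/-- The positive semidefinite square root, as `Matrix.PosSemidef.sqrt` was defined in Mathlib
(Dec 2024); that definition has since been removed from Mathlib. -/
noncomputable def Matrix.PosSemidef.sqrt {n : Type*} [Fintype n] [DecidableEq n]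
    {A : Matrix n n ℝ} (hA : A.PosSemidef) : Matrix n n ℝ :=
  hA.1.eigenvectorUnitary.1 * diagonal ((↑) ∘ (√·) ∘ hA.1.eigenvalues) *
  (star hA.1.eigenvectorUnitary : Matrix n n ℝ)

lemma rank_add_le' {n : ℕ} (A B : Matrix (Fin n) (Fin n) ℝ) :
    (A + B).rank ≤ A.rank + B.rank := by
  simp only [Matrix.rank]
  have h : LinearMap.range (A + B).mulVecLin ≤
      LinearMap.range A.mulVecLin ⊔ LinearMap.range B.mulVecLin := by
    rintro x ⟨v, rfl⟩
    rw [Matrix.mulVecLin_apply, Matrix.add_mulVec]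
    exact Submodule.add_mem_sup ⟨v, rfl⟩ ⟨v, rfl⟩
  calc _ ≤ _ := Submodule.finrank_mono h
    _ ≤ _ := Submodule.finrank_add_le_finrank_add_finrank _ _

lemma trace_mul_transpose_self {n : ℕ} (A : Matrix (Fin n) (Fin n) ℝ) :
    (A * Aᵀ).trace = frobSq A := by
  simp [Matrix.trace, Matrix.diag, Matrix.mul_apply, frobSq, sq]

/-- For SPSD `K`, orthogonal projections `Π` of rank `k` and `M` of
rank `s`: `tr((I−Π)K^{1/2}(I−M)K^{1/2}(I−Π)) = ‖(I−Π)K^{1/2}(I−M)‖_F²`, and this is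
at least `‖K^{1/2} − (K^{1/2})_{s+k}‖_F²`. -/
theorem residual_trace_lower_bound {n s k : ℕ}
    (K : Matrix (Fin n) (Fin n) ℝ) (hK : K.PosSemidef)
    (Pr : Matrix (Fin n) (Fin n) ℝ) (hPr : IsOrthProj Pr) (hPrRank : Pr.rank = k)
    (M : Matrix (Fin n) (Fin n) ℝ) (hM : IsOrthProj M) (hMRank : M.rank = s)
    (R : Matrix (Fin n) (Fin n) ℝ) (hR : IsTruncatedSVD hK.sqrt R (s + k)) :
    ((1 - Pr) * hK.sqrt * (1 - M) * hK.sqrt * (1 - Pr)).trace =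
      frobSq ((1 - Pr) * hK.sqrt * (1 - M)) ∧
    frobSq (hK.sqrt - R) ≤ frobSq ((1 - Pr) * hK.sqrt * (1 - M)) := by
  set S := hK.sqrt with hS
  have hSsym : Sᵀ = S := by
    simp [hS, Matrix.PosSemidef.sqrt, Matrix.transpose_mul, Matrix.star_eq_conjTranspose,
      Matrix.conjTranspose_eq_transpose_of_trivial, Matrix.mul_assoc]
  have hPrSym : Prᵀ = Pr := hPr.1
  have hMSym : Mᵀ = M := hM.1
  have hMI : (1 - M) * (1 - M) = 1 - M := by
    have := hM.2
    noncomm_ring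
    rw [this]; abel
  set A := (1 - Pr) * S * (1 - M) with hA
  constructor
  · have hAT : Aᵀ = (1 - M) * S * (1 - Pr) := by
      simp [hA, Matrix.transpose_mul, hSsym, hPrSym, hMSym, Matrix.mul_assoc]
    have : (1 - Pr) * S * (1 - M) * S * (1 - Pr) = A * Aᵀ := by
      rw [hAT, hA]
      calc (1 - Pr) * S * (1 - M) * S * (1 - Pr)
          = (1 - Pr) * S * ((1 - M) * (1 - M)) * (S * (1 - Pr)) := by
            rw [hMI]; noncomm_ring
        _ = (1 - Pr) * S * (1 - M) * ((1 - M) * S * (1 - Pr)) := by noncomm_ring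
    rw [this, trace_mul_transpose_self]
  · have hZ : hK.sqrt - A = Pr * S + (1 - Pr) * S * M := by
      rw [hA]; noncomm_ring
    have hrank : (hK.sqrt - A).rank ≤ s + k := by
      rw [hZ]
      calc (Pr * S + (1 - Pr) * S * M).rank
          ≤ (Pr * S).rank + ((1 - Pr) * S * M).rank := rank_add_le' _ _
        _ ≤ Pr.rank + M.rank := by
            gcongr
            · exact Matrix.rank_mul_le_left _ _
            · exact Matrix.rank_mul_le_right _ _
        _ = s + k := by rw [hPrRank, hMRank, Nat.add_comm]
    have := hR.2 (hK.sqrt - A) hrank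
    simpa [← hS] using this
end
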